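/- Let A, Y, S be binary random variables and U finite-valued, on a discrete probability space. Assume S ⊥ A | (Y, U), and that there exists δ ∈ (0,1) such that P(Y=1 | A=a, U=u) ≤ δ for all a, u with P(A=a, U=u) > 0. Then for all a, u such that all conditioning events below have positive probability: 1 − δ < P(A=a | U=u, Y=0, S=1) / P(A=a | U=u) < 1/(1 − δ). -/

import Mathlib

open scoped BigOperators
open Real

attribute [local instance] Classical.propDecidable

noncomputable section

variable {Ω : Type*}

/-- Probability of an event under weight function `P` on a finite sample space. -/
def pr [Fintype Ω] (P : Ω → ℝ) (E : Ω → Prop) : ℝ :=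
  ∑ ω, if E ω then P ω else 0

/-- Conditional probability `P(E | F)`. -/
def cpr [Fintype Ω] (P : Ω → ℝ) (E F : Ω → Prop) : ℝ :=
  pr P (fun ω => E ω ∧ F ω) / pr P F

/-- Conditional expectation `E[f | F]`. -/
def cexp [Fintype Ω] (P : Ω → ℝ) (f : Ω → ℝ) (F : Ω → Prop) : ℝ :=
  (∑ ω, if F ω then f ω * P ω else 0) / pr P F

/-- Conditional independence `f ⊥ g | h` under `P`. -/
def CondIndep [Fintype Ω] (P : Ω → ℝ) {α β γ : Type*}
    (f : Ω → α) (g : Ω → β) (h : Ω → γ) : Prop :=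
  ∀ a b c, pr P (fun ω => h ω = c) ≠ 0 →
    cpr P (fun ω => f ω = a ∧ g ω = b) (fun ω => h ω = c) =
      cpr P (fun ω => f ω = a) (fun ω => h ω = c) *
        cpr P (fun ω => g ω = b) (fun ω => h ω = c)

/-! Since `S ⊥ A | (Y, U)`, selection drops out: `P(A=a | U=u, Y=0, S=1) = P(A=a | U=u, Y=0)`.
The ratio to `P(A=a | U=u)` is then the share of the stratum `A = a` among the `Y = 0`
subjects divided by its share in the population; as `A` is binary and every `(A, U)`-stratum
loses at most the fraction `δ` of its mass to `Y = 1`, this ratio lies strictly between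
`1 - δ` and `1 / (1 - δ)`. -/

section Probability

variable [Fintype Ω] (P : Ω → ℝ)

lemma pr_nonneg (hP : ∀ ω, 0 ≤ P ω) (E : Ω → Prop) : 0 ≤ pr P E :=
  Finset.sum_nonneg fun ω _ => by split_ifs <;> simp [hP ω]

lemma pr_congr {E F : Ω → Prop} (h : ∀ ω, E ω ↔ F ω) : pr P E = pr P F :=
  congrArg (pr P) (funext fun ω => propext (h ω))

lemma pr_mono (hP : ∀ ω, 0 ≤ P ω) {E F : Ω → Prop} (h : ∀ ω, E ω → F ω) :
    pr P E ≤ pr P F :=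
  Finset.sum_le_sum fun ω _ => by
    by_cases hE : E ω
    · simp [hE, h ω hE]
    · split_ifs <;> simp [hP ω]

lemma pr_eq_pr_and_add_pr_not_and (E F : Ω → Prop) :
    pr P F = pr P (fun ω => E ω ∧ F ω) + pr P (fun ω => ¬E ω ∧ F ω) := by
  unfold pr
  rw [← Finset.sum_add_distrib]
  refine Finset.sum_congr rfl fun ω _ => ?_
  by_cases hE : E ω <;> simp [hE]

lemma pr_eq_add_of_binary {A : Ω → ℕ} (hA : ∀ ω, A ω = 0 ∨ A ω = 1) {a : ℕ}
    (ha : a = 0 ∨ a = 1) (F : Ω → Prop) :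
    pr P F = pr P (fun ω => A ω = a ∧ F ω) + pr P (fun ω => A ω = 1 - a ∧ F ω) := by
  rw [pr_eq_pr_and_add_pr_not_and P (fun ω => A ω = a) F]
  congr 1
  exact pr_congr P fun ω => and_congr_left' (by rcases hA ω with h | h <;> omega)

lemma one_sub_mul_pr_le_pr_and_not (hP : ∀ ω, 0 ≤ P ω) {E F : Ω → Prop} {δ : ℝ}
    (hF : pr P E ≠ 0 → cpr P F E ≤ δ) :
    (1 - δ) * pr P E ≤ pr P (fun ω => E ω ∧ ¬F ω) := by
  have hsplit : pr P E = pr P (fun ω => F ω ∧ E ω) + pr P (fun ω => E ω ∧ ¬F ω) := by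
    rw [pr_eq_pr_and_add_pr_not_and P F E]
    exact congrArg _ (pr_congr P fun ω => and_comm)
  rcases (pr_nonneg P hP E).eq_or_lt with hE | hE
  · rw [← hE, mul_zero]
    exact pr_nonneg P hP _
  · have hFE := hF hE.ne'
    rw [cpr, div_le_iff₀ hE] at hFE
    linarith

lemma CondIndep.cpr_and_eq_cpr {α β γ : Type*} {f : Ω → α} {g : Ω → β} {h : Ω → γ}
    (hP : ∀ ω, 0 ≤ P ω) (hfg : CondIndep P f g h) (a : α) (b : β) (c : γ)
    (hca : pr P (fun ω => h ω = c ∧ f ω = a) ≠ 0) :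
    cpr P (fun ω => g ω = b) (fun ω => h ω = c ∧ f ω = a) =
      cpr P (fun ω => g ω = b) (fun ω => h ω = c) := by
  have hc : pr P (fun ω => h ω = c) ≠ 0 := fun h0 =>
    hca (le_antisymm (h0 ▸ pr_mono P hP fun ω hω => hω.1) (pr_nonneg P hP _))
  have hind := hfg a b c hc
  have e₁ : pr P (fun ω => (f ω = a ∧ g ω = b) ∧ h ω = c) =
      pr P (fun ω => g ω = b ∧ h ω = c ∧ f ω = a) := pr_congr P fun ω => by tauto
  have e₂ : pr P (fun ω => f ω = a ∧ h ω = c) = pr P (fun ω => h ω = c ∧ f ω = a) :=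
    pr_congr P fun ω => and_comm
  unfold cpr at hind ⊢
  rw [e₁, e₂] at hind
  rw [div_eq_div_iff hca hc]
  field_simp at hind
  linear_combination hind

end Probability

lemma share_ratio_mem_Ioo {δ m m' n n' : ℝ} (hδ : 0 < δ ∧ δ < 1) (hm : 0 < m)
    (hm' : 0 ≤ m') (hn : (1 - δ) * m ≤ n ∧ n ≤ m) (hn' : (1 - δ) * m' ≤ n' ∧ n' ≤ m') :
    (n / (n + n')) / (m / (m + m')) ∈ Set.Ioo (1 - δ) (1 / (1 - δ)) := by
  obtain ⟨hδ0, hδ1⟩ := hδ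
  have hpos : 0 < n := lt_of_lt_of_le (by nlinarith) hn.1
  have hpos' : 0 ≤ n' := le_trans (by nlinarith) hn'.1
  rw [Set.mem_Ioo, div_div_div_eq, lt_div_iff₀ (by positivity),
    div_lt_div_iff₀ (by positivity) (by linarith)]
  -- both gaps are `δ m n` plus nonnegative terms, hence strict
  refine ⟨?_, ?_⟩
  · nlinarith [mul_pos hδ0 (mul_pos hpos hm), mul_nonneg hm' (by linarith : 0 ≤ n - (1 - δ) * m),
      mul_nonneg hm.le (by linarith : 0 ≤ m' - n')]
  · nlinarith [mul_pos hδ0 (mul_pos hpos hm),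
      mul_nonneg (mul_nonneg (by linarith : 0 ≤ 1 - δ) hm') (by linarith : 0 ≤ m - n),
      mul_nonneg hm.le (by linarith : 0 ≤ n' - (1 - δ) * m')]

theorem stmt4_general [Fintype Ω] {𝒰 : Type*}
    (P : Ω → ℝ) (hP : ∀ ω, 0 ≤ P ω)
    (A Y S : Ω → ℕ) (U : Ω → 𝒰)
    (hA : ∀ ω, A ω = 0 ∨ A ω = 1) (hY : ∀ ω, Y ω = 0 ∨ Y ω = 1)
    (hTIS : CondIndep P S A (fun ω => (Y ω, U ω)))
    (δ : ℝ) (hδ : 0 < δ ∧ δ < 1)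
    (hrare : ∀ (a : ℕ) (u : 𝒰), pr P (fun ω => A ω = a ∧ U ω = u) ≠ 0 →
      cpr P (fun ω => Y ω = 1) (fun ω => A ω = a ∧ U ω = u) ≤ δ) :
    ∀ (a : ℕ) (u : 𝒰), (a = 0 ∨ a = 1) →
      pr P (fun ω => A ω = a ∧ U ω = u) ≠ 0 →
      pr P (fun ω => U ω = u ∧ Y ω = 0 ∧ S ω = 1) ≠ 0 →
      1 - δ < cpr P (fun ω => A ω = a) (fun ω => U ω = u ∧ Y ω = 0 ∧ S ω = 1) /
          cpr P (fun ω => A ω = a) (fun ω => U ω = u) ∧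
        cpr P (fun ω => A ω = a) (fun ω => U ω = u ∧ Y ω = 0 ∧ S ω = 1) /
          cpr P (fun ω => A ω = a) (fun ω => U ω = u) < 1 / (1 - δ) := by
  intro a u ha hAU hsel
  have hstratum : ∀ b, (1 - δ) * pr P (fun ω => A ω = b ∧ U ω = u) ≤
        pr P (fun ω => A ω = b ∧ Y ω = 0 ∧ U ω = u) ∧
      pr P (fun ω => A ω = b ∧ Y ω = 0 ∧ U ω = u) ≤ pr P (fun ω => A ω = b ∧ U ω = u) := by
    intro b
    have hY0 := one_sub_mul_pr_le_pr_and_not P hP (hrare b u)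
    have hnotY1 : pr P (fun ω => (A ω = b ∧ U ω = u) ∧ ¬Y ω = 1) =
        pr P (fun ω => A ω = b ∧ Y ω = 0 ∧ U ω = u) :=
      pr_congr P fun ω => by rcases hY ω with h | h <;> simp [h, and_comm]
    exact ⟨hnotY1 ▸ hY0, pr_mono P hP fun ω hω => ⟨hω.1, hω.2.2⟩⟩
  have hselEvent : (fun ω => U ω = u ∧ Y ω = 0 ∧ S ω = 1) =
      fun ω => (Y ω, U ω) = ((0 : ℕ), u) ∧ S ω = 1 := by
    ext ω; simp only [Prod.mk.injEq]; tauto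
  have hYU : (fun ω => (Y ω, U ω) = ((0 : ℕ), u)) = fun ω => Y ω = 0 ∧ U ω = u := by
    ext ω; simp only [Prod.mk.injEq]
  rw [hselEvent] at hsel ⊢
  rw [hTIS.cpr_and_eq_cpr P hP 1 a _ hsel, hYU, cpr, cpr,
    pr_eq_add_of_binary P hA ha (fun ω => Y ω = 0 ∧ U ω = u),
    pr_eq_add_of_binary P hA ha (fun ω => U ω = u)]
  exact share_ratio_mem_Ioo hδ ((pr_nonneg P hP _).lt_of_ne' hAU) (pr_nonneg P hP _)
    (hstratum a) (hstratum (1 - a))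

/-- Lemma S1(b): under the rare disease assumption and
treatment-independent sampling, the selected test-negative treatment
probability approximates the population one. -/
theorem stmt4 [Fintype Ω] {𝒰 : Type*} [Fintype 𝒰]
    (P : Ω → ℝ) (hP : ∀ ω, 0 ≤ P ω) (hPsum : ∑ ω, P ω = 1)
    (A Y S : Ω → ℕ) (U : Ω → 𝒰)
    (hA : ∀ ω, A ω = 0 ∨ A ω = 1) (hY : ∀ ω, Y ω = 0 ∨ Y ω = 1)
    (hS : ∀ ω, S ω = 0 ∨ S ω = 1)
    (hTIS : CondIndep P S A (fun ω => (Y ω, U ω)))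
    (δ : ℝ) (hδ : 0 < δ ∧ δ < 1)
    (hrare : ∀ (a : ℕ) (u : 𝒰), pr P (fun ω => A ω = a ∧ U ω = u) ≠ 0 →
      cpr P (fun ω => Y ω = 1) (fun ω => A ω = a ∧ U ω = u) ≤ δ) :
    ∀ (a : ℕ) (u : 𝒰), (a = 0 ∨ a = 1) →
      pr P (fun ω => A ω = a ∧ U ω = u) ≠ 0 →
      pr P (fun ω => U ω = u ∧ Y ω = 0 ∧ S ω = 1) ≠ 0 →
      1 - δ < cpr P (fun ω => A ω = a) (fun ω => U ω = u ∧ Y ω = 0 ∧ S ω = 1) /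
          cpr P (fun ω => A ω = a) (fun ω => U ω = u) ∧
        cpr P (fun ω => A ω = a) (fun ω => U ω = u ∧ Y ω = 0 ∧ S ω = 1) /
          cpr P (fun ω => A ω = a) (fun ω => U ω = u) < 1 / (1 - δ) :=
  stmt4_general P hP A Y S U hA hY hTIS δ hδ hrare
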